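/- arXiv:2310.14375 — 2 statements merged into one kernel-verified Lean document; each statement's English description precedes it below -/
import Mathlib

section
/- Let M, a be reals with 0 ≤ a < M and let u₀ be a real constant. On U, the 2-form F₃ = −(u₀/sinθ) dθ ∧ (−dt + a sin²θ dφ) and the 2-form F₄ = (u₀/Δ) dr ∧ (a dt − (r²+a²) dφ) are each closed and have identically vanishing current density (j^μ = 0 for all μ); i.e., F₃ and F₄ are vacuum solutions of Maxwell's equations in the exterior Kerr geometry. -/
noncomputable section

/-- Partial derivative of `f` in the coordinate direction `μ`,
coordinates `(x 0, x 1, x 2, x 3) = (t, r, θ, φ)`. -/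
def pd (μ : Fin 4) (f : (Fin 4 → ℝ) → ℝ) (x : Fin 4 → ℝ) : ℝ :=
  fderiv ℝ f x (Pi.single μ 1)

/-- ρ² = r² + a² cos²θ. -/
def rho2 (a : ℝ) (x : Fin 4 → ℝ) : ℝ := (x 1) ^ 2 + a ^ 2 * Real.cos (x 2) ^ 2

/-- Δ = r² − 2Mr + a². -/
def Del (M a : ℝ) (x : Fin 4 → ℝ) : ℝ := (x 1) ^ 2 - 2 * M * (x 1) + a ^ 2

/-- Σ² = (r²+a²)² − Δ a² sin²θ. -/
def Sig2 (M a : ℝ) (x : Fin 4 → ℝ) : ℝ :=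
  ((x 1) ^ 2 + a ^ 2) ^ 2 - Del M a x * a ^ 2 * Real.sin (x 2) ^ 2

/-- The Kerr metric in Boyer–Lindquist coordinates `(t, r, θ, φ)`. -/
def kerr (M a : ℝ) (x : Fin 4 → ℝ) : Matrix (Fin 4) (Fin 4) ℝ :=
  Matrix.of fun μ ν =>
    if μ = 0 ∧ ν = 0 then -1 + 2 * M * (x 1) / rho2 a x
    else if (μ = 0 ∧ ν = 3) ∨ (μ = 3 ∧ ν = 0) then
      -(2 * M * (x 1) * a * Real.sin (x 2) ^ 2) / rho2 a x
    else if μ = 1 ∧ ν = 1 then rho2 a x / Del M a x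
    else if μ = 2 ∧ ν = 2 then rho2 a x
    else if μ = 3 ∧ ν = 3 then Sig2 M a x * Real.sin (x 2) ^ 2 / rho2 a x
    else 0

/-- The exterior Kerr domain U = {r > r₊, 0 < θ < π}. -/
def KerrExt (M a : ℝ) : Set (Fin 4 → ℝ) :=
  {x | M + Real.sqrt (M ^ 2 - a ^ 2) < x 1 ∧ 0 < x 2 ∧ x 2 < Real.pi}

/-- `wedge μ ν f` is the antisymmetric matrix of the 2-form `f dx^μ ∧ dx^ν`. -/
def wedge (μ ν : Fin 4) (f : ℝ) : Matrix (Fin 4) (Fin 4) ℝ :=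
  Matrix.of fun i j => if i = μ ∧ j = ν then f else if i = ν ∧ j = μ then -f else 0

/-- A 2-form `F` is closed on `S`: ∂_μ F_{νλ} + ∂_ν F_{λμ} + ∂_λ F_{μν} = 0. -/
def Closed2Form (F : (Fin 4 → ℝ) → Matrix (Fin 4) (Fin 4) ℝ) (S : Set (Fin 4 → ℝ)) : Prop :=
  ∀ x ∈ S, ∀ μ ν lam : Fin 4,
    pd μ (fun y => F y ν lam) x + pd ν (fun y => F y lam μ) x
      + pd lam (fun y => F y μ ν) x = 0

/-- Current density j^μ = (ρ²sinθ)⁻¹ ∂_ν (ρ²sinθ g^{μα} g^{νβ} F_{αβ}). -/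
def current (M a : ℝ) (F : (Fin 4 → ℝ) → Matrix (Fin 4) (Fin 4) ℝ)
    (x : Fin 4 → ℝ) (μ : Fin 4) : ℝ :=
  (rho2 a x * Real.sin (x 2))⁻¹ *
    ∑ ν : Fin 4, pd ν (fun y => rho2 a y * Real.sin (y 2) *
      ∑ i : Fin 4, ∑ j : Fin 4, (kerr M a y)⁻¹ μ i * (kerr M a y)⁻¹ ν j * F y i j) x

/-- `F` is force-free on `S`: F_{μν} j^ν = 0 for the current density `j` of `F`. -/
def ForceFree (M a : ℝ) (F : (Fin 4 → ℝ) → Matrix (Fin 4) (Fin 4) ℝ)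
    (S : Set (Fin 4 → ℝ)) : Prop :=
  ∀ x ∈ S, ∀ μ : Fin 4, ∑ ν : Fin 4, F x μ ν * current M a F x ν = 0

/-- F₃ = −(u₀/sinθ) dθ ∧ (−dt + a sin²θ dφ). -/
def F3 (a u₀ : ℝ) (x : Fin 4 → ℝ) : Matrix (Fin 4) (Fin 4) ℝ :=
  wedge 2 0 (-(u₀ / Real.sin (x 2)) * (-1))
    + wedge 2 3 (-(u₀ / Real.sin (x 2)) * (a * Real.sin (x 2) ^ 2))

/-- F₄ = (u₀/Δ) dr ∧ (a dt − (r²+a²) dφ). -/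
def F4 (M a u₀ : ℝ) (x : Fin 4 → ℝ) : Matrix (Fin 4) (Fin 4) ℝ :=
  wedge 1 0 ((u₀ / Del M a x) * a)
    + wedge 1 3 ((u₀ / Del M a x) * (-((x 1) ^ 2 + a ^ 2)))

/-! Both fields depend on one coordinate only and have the form `dxᵏ ∧ A(xᵏ)` (`k = θ` for `F₃`,
`k = r` for `F₄`), so they are closed. Raising the indices with the Kerr inverse metric and
multiplying by `ρ² sin θ`, the `ρ²` factors cancel: the Maxwell density `𝔉^{μν}` of `F₃` depends on
`r` only and has no `r`-column, that of `F₄` depends on `θ` only and has no `θ`-column. Hence every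
term `∂_ν 𝔉^{μν}` of the divergence vanishes. -/

open Real Filter Topology Matrix

/-- No differentiability is needed: where `g` is not differentiable, neither is `y ↦ g (y k)`, and
both sides are the junk value `0`. -/
theorem pd_comp_eval (g : ℝ → ℝ) (k μ : Fin 4) (x : Fin 4 → ℝ) :
    pd μ (fun y => g (y k)) x = if μ = k then deriv g (x k) else 0 := by
  by_cases hg : DifferentiableAt ℝ g (x k)
  · have h : HasFDerivAt (fun y : Fin 4 → ℝ => g (y k))
        ((fderiv ℝ g (x k)).comp (ContinuousLinearMap.proj k)) x :=
      hg.hasFDerivAt.comp x (hasFDerivAt_apply k x)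
    rw [pd, h.fderiv]
    split_ifs with hμ
    · subst hμ
      simp only [ContinuousLinearMap.comp_apply, ContinuousLinearMap.proj_apply, Pi.single_eq_same]
      rfl
    · simp [Ne.symm hμ]
  · have hcomp : ¬ DifferentiableAt ℝ (fun y : Fin 4 → ℝ => g (y k)) x := fun h => hg <| by
      have h' : DifferentiableAt ℝ (fun y : Fin 4 → ℝ => g (y k)) (Function.update x k (x k)) := by
        rwa [Function.update_eq_self]
      simpa [Function.comp_def] using h'.comp (x k) (hasFDerivAt_update x (x k)).differentiableAt
    rw [pd, fderiv_zero_of_not_differentiableAt hcomp, deriv_zero_of_not_differentiableAt hg]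
    simp

theorem cyclic_sum_ite_eq_zero {ι : Type*} [DecidableEq ι] {k : ι} (D : ι → ι → ℝ)
    (hanti : ∀ i j, D j i = -D i j) (hsupp : ∀ i j, i ≠ k → j ≠ k → D i j = 0) (μ ν l : ι) :
    ((if μ = k then D ν l else 0) + (if ν = k then D l μ else 0)
      + if l = k then D μ ν else 0) = 0 := by
  have hdiag : D k k = 0 := by linarith [hanti k k]
  by_cases hμ : μ = k <;> by_cases hν : ν = k <;> by_cases hl : l = k <;>
    simp only [hμ, hν, hl, if_true, if_false, add_zero, zero_add]
  all_goals first
    | linarith [hanti k μ, hanti k ν, hanti k l]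
    | exact hsupp _ _ ‹_› ‹_›

theorem closed2Form_comp_eval {k : Fin 4} {G : ℝ → Matrix (Fin 4) (Fin 4) ℝ}
    (hanti : ∀ t, (G t)ᵀ = -G t) (hsupp : ∀ t i j, i ≠ k → j ≠ k → G t i j = 0)
    (S : Set (Fin 4 → ℝ)) : Closed2Form (fun y => G (y k)) S := by
  intro x _ μ ν l
  rw [pd_comp_eval (fun t => G t ν l), pd_comp_eval (fun t => G t l μ),
    pd_comp_eval (fun t => G t μ ν)]
  refine cyclic_sum_ite_eq_zero (fun i j => deriv (fun t => G t i j) (x k)) (fun i j => ?_)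
    (fun i j hi hj => ?_) μ ν l
  · simp only [← Matrix.transpose_apply (G _) i j, hanti, Matrix.neg_apply]
    exact deriv.fun_neg
  · simp only [hsupp _ i j hi hj, deriv_const]

theorem wedge_transpose {μ ν : Fin 4} (h : μ ≠ ν) (f : ℝ) :
    (wedge μ ν f)ᵀ = -wedge μ ν f := by
  ext i j
  simp only [wedge, Matrix.transpose_apply, Matrix.neg_apply, Matrix.of_apply]
  split_ifs <;> simp_all

theorem wedge_apply_of_ne_of_ne {μ ν i j : Fin 4} (hi : i ≠ μ) (hj : j ≠ μ) (f : ℝ) :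
    wedge μ ν f i j = 0 := by
  simp [wedge, hi, hj]

theorem closed2Form_F3 (a u₀ : ℝ) (S : Set (Fin 4 → ℝ)) : Closed2Form (F3 a u₀) S :=
  closed2Form_comp_eval (k := 2)
    (G := fun θ => wedge 2 0 (-(u₀ / sin θ) * (-1)) + wedge 2 3 (-(u₀ / sin θ) * (a * sin θ ^ 2)))
    (fun _ => by simp (disch := decide) only [Matrix.transpose_add, wedge_transpose, neg_add])
    (fun _ _ _ hi hj => by
      simp only [Matrix.add_apply, wedge_apply_of_ne_of_ne hi hj, add_zero]) S

theorem closed2Form_F4 (M a u₀ : ℝ) (S : Set (Fin 4 → ℝ)) : Closed2Form (F4 M a u₀) S :=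
  closed2Form_comp_eval (k := 1)
    (G := fun r => wedge 1 0 (u₀ / (r ^ 2 - 2 * M * r + a ^ 2) * a)
      + wedge 1 3 (u₀ / (r ^ 2 - 2 * M * r + a ^ 2) * (-(r ^ 2 + a ^ 2))))
    (fun _ => by simp (disch := decide) only [Matrix.transpose_add, wedge_transpose, neg_add])
    (fun _ _ _ hi hj => by
      simp only [Matrix.add_apply, wedge_apply_of_ne_of_ne hi hj, add_zero]) S

theorem isOpen_kerrExt (M a : ℝ) : IsOpen (KerrExt M a) :=
  (isOpen_Ioi.preimage (continuous_apply 1)).inter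
    ((isOpen_Ioi.preimage (continuous_apply 2)).inter (isOpen_Iio.preimage (continuous_apply 2)))

section KerrExt

variable {M a : ℝ} {x : Fin 4 → ℝ}

theorem del_pos_of_mem_kerrExt (hx : x ∈ KerrExt M a) : 0 < Del M a x := by
  obtain ⟨hr, -⟩ := hx
  have hs := Real.sqrt_nonneg (M ^ 2 - a ^ 2)
  rcases le_total 0 (M ^ 2 - a ^ 2) with h | h
  · have := (Real.sqrt_lt' (by linarith)).1 (show √(M ^ 2 - a ^ 2) < x 1 - M by linarith)
    unfold Del; nlinarith
  · unfold Del; nlinarith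

theorem rho2_pos_of_mem_kerrExt (hM : 0 ≤ M) (hx : x ∈ KerrExt M a) : 0 < rho2 a x := by
  have : 0 < x 1 := by linarith [hx.1, Real.sqrt_nonneg (M ^ 2 - a ^ 2)]
  unfold rho2; positivity

theorem sin_pos_of_mem_kerrExt (hx : x ∈ KerrExt M a) : 0 < sin (x 2) :=
  Real.sin_pos_of_pos_of_lt_pi hx.2.1 hx.2.2

end KerrExt

theorem eventually_kerr_nondegenerate {M a : ℝ} (hM : 0 ≤ M) {x : Fin 4 → ℝ}
    (hx : x ∈ KerrExt M a) : ∀ᶠ y in 𝓝 x, Del M a y ≠ 0 ∧ rho2 a y ≠ 0 ∧ sin (y 2) ≠ 0 :=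
  eventually_of_mem ((isOpen_kerrExt M a).mem_nhds hx) fun _ hy =>
    ⟨(del_pos_of_mem_kerrExt hy).ne', (rho2_pos_of_mem_kerrExt hM hy).ne',
      (sin_pos_of_mem_kerrExt hy).ne'⟩

def kerrInv (M a : ℝ) (x : Fin 4 → ℝ) : Matrix (Fin 4) (Fin 4) ℝ :=
  Matrix.of fun μ ν =>
    if μ = 0 ∧ ν = 0 then -(Sig2 M a x) / (rho2 a x * Del M a x)
    else if (μ = 0 ∧ ν = 3) ∨ (μ = 3 ∧ ν = 0) then
      -(2 * M * (x 1) * a) / (rho2 a x * Del M a x)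
    else if μ = 1 ∧ ν = 1 then Del M a x / rho2 a x
    else if μ = 2 ∧ ν = 2 then (rho2 a x)⁻¹
    else if μ = 3 ∧ ν = 3 then
      (rho2 a x - 2 * M * (x 1)) / (rho2 a x * Del M a x * sin (x 2) ^ 2)
    else 0

theorem kerr_inv {M a : ℝ} {x : Fin 4 → ℝ} (hΔ : Del M a x ≠ 0) (hρ : rho2 a x ≠ 0)
    (hs : sin (x 2) ≠ 0) : (kerr M a x)⁻¹ = kerrInv M a x := by
  refine Matrix.inv_eq_right_inv ?_
  have hcos : cos (x 2) ^ 2 = 1 - sin (x 2) ^ 2 := cos_sq' _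
  rw [rho2, hcos] at hρ
  replace hΔ : x 1 * (x 1 - 2 * M) + a ^ 2 ≠ 0 := fun h => hΔ (by unfold Del; linear_combination h)
  ext i j
  fin_cases i <;> fin_cases j <;>
    simp [kerr, kerrInv, Matrix.mul_apply, Fin.sum_univ_four, rho2, Del, Sig2, hcos] <;>
    field_simp <;> ring

theorem sum_pd_comp_eval_eq_zero {k : Fin 4} {H : ℝ → Matrix (Fin 4) (Fin 4) ℝ}
    (hH : ∀ t μ, H t μ k = 0) (x : Fin 4 → ℝ) (μ : Fin 4) :
    ∑ ν, pd ν (fun y => H (y k) μ ν) x = 0 := by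
  refine Finset.sum_eq_zero fun ν _ => ?_
  rw [pd_comp_eval (fun t => H t μ ν)]
  split_ifs with hν
  · subst hν
    simp [hH]
  · rfl

def maxwellDensity (M a : ℝ) (F : (Fin 4 → ℝ) → Matrix (Fin 4) (Fin 4) ℝ) (y : Fin 4 → ℝ) :
    Matrix (Fin 4) (Fin 4) ℝ :=
  Matrix.of fun μ ν => rho2 a y * sin (y 2) *
    ∑ i : Fin 4, ∑ j : Fin 4, (kerr M a y)⁻¹ μ i * (kerr M a y)⁻¹ ν j * F y i j

theorem current_eq (M a : ℝ) (F : (Fin 4 → ℝ) → Matrix (Fin 4) (Fin 4) ℝ) (x : Fin 4 → ℝ)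
    (μ : Fin 4) : current M a F x μ =
      (rho2 a x * sin (x 2))⁻¹ * ∑ ν, pd ν (fun y => maxwellDensity M a F y μ ν) x :=
  rfl

theorem current_eq_zero_of_eventuallyEq {M a : ℝ} {F : (Fin 4 → ℝ) → Matrix (Fin 4) (Fin 4) ℝ}
    {x : Fin 4 → ℝ} {k : Fin 4} {H : ℝ → Matrix (Fin 4) (Fin 4) ℝ} (hH : ∀ t μ, H t μ k = 0)
    (hF : maxwellDensity M a F =ᶠ[𝓝 x] fun y => H (y k)) (μ : Fin 4) :
    current M a F x μ = 0 := by
  have hdiv : ∑ ν, pd ν (fun y => maxwellDensity M a F y μ ν) x = 0 := by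
    rw [← sum_pd_comp_eval_eq_zero hH x μ]
    refine Finset.sum_congr rfl fun ν _ => ?_
    have hFμν : (fun y => maxwellDensity M a F y μ ν) =ᶠ[𝓝 x] fun y => H (y k) μ ν :=
      hF.mono fun y hy => congrFun (congrFun hy μ) ν
    rw [pd, pd, hFμν.fderiv_eq]
  rw [current_eq, hdiv, mul_zero]

theorem sum_sum_mul_wedge (A B : Fin 4 → ℝ) {μ ν : Fin 4} (h : μ ≠ ν) (f : ℝ) :
    ∑ i, ∑ j, A i * B j * wedge μ ν f i j = f * (A μ * B ν - A ν * B μ) := by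
  fin_cases μ <;> fin_cases ν <;> simp_all [wedge, Fin.sum_univ_four] <;> ring

def F3Density (M a u₀ r : ℝ) : Matrix (Fin 4) (Fin 4) ℝ :=
  wedge 0 2 (u₀ * (r ^ 2 + a ^ 2) / (r ^ 2 - 2 * M * r + a ^ 2))
    + wedge 3 2 (u₀ * a / (r ^ 2 - 2 * M * r + a ^ 2))

def F4Density (a u₀ θ : ℝ) : Matrix (Fin 4) (Fin 4) ℝ :=
  wedge 0 1 (u₀ * a * sin θ) + wedge 3 1 (u₀ / sin θ)

theorem maxwellDensity_F3 {M a u₀ : ℝ} {y : Fin 4 → ℝ} (hΔ : Del M a y ≠ 0)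
    (hρ : rho2 a y ≠ 0) (hs : sin (y 2) ≠ 0) :
    maxwellDensity M a (F3 a u₀) y = F3Density M a u₀ (y 1) := by
  ext μ ν
  simp (disch := decide) only [maxwellDensity, Matrix.of_apply, kerr_inv hΔ hρ hs, F3,
    Matrix.add_apply, mul_add, Finset.sum_add_distrib, sum_sum_mul_wedge]
  have hcos : cos (y 2) ^ 2 = 1 - sin (y 2) ^ 2 := cos_sq' _
  rw [rho2, hcos] at hρ
  fin_cases μ <;> fin_cases ν <;> simp [kerrInv, F3Density, wedge, rho2, Del, Sig2, hcos] <;>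
    field_simp <;> ring

theorem maxwellDensity_F4 {M a u₀ : ℝ} {y : Fin 4 → ℝ} (hΔ : Del M a y ≠ 0)
    (hρ : rho2 a y ≠ 0) (hs : sin (y 2) ≠ 0) :
    maxwellDensity M a (F4 M a u₀) y = F4Density a u₀ (y 2) := by
  ext μ ν
  simp (disch := decide) only [maxwellDensity, Matrix.of_apply, kerr_inv hΔ hρ hs, F4,
    Matrix.add_apply, mul_add, Finset.sum_add_distrib, sum_sum_mul_wedge]
  have hcos : cos (y 2) ^ 2 = 1 - sin (y 2) ^ 2 := cos_sq' _
  rw [rho2, hcos] at hρ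
  have hΔ' : y 1 * (y 1 - 2 * M) + a ^ 2 ≠ 0 := fun h => hΔ (by unfold Del; linear_combination h)
  fin_cases μ <;> fin_cases ν <;> simp [kerrInv, F4Density, wedge, rho2, Del, Sig2, hcos] <;>
    field_simp <;> ring

/-- F₃ and F₄ are closed with vanishing current density, i.e. they are
vacuum solutions of Maxwell's equations in exterior Kerr geometry. -/
theorem kerr_F3_F4_vacuum (M a u₀ : ℝ) (ha : 0 ≤ a) (haM : a < M) :
    (Closed2Form (F3 a u₀) (KerrExt M a) ∧
      ∀ x ∈ KerrExt M a, ∀ μ : Fin 4, current M a (F3 a u₀) x μ = 0) ∧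
    (Closed2Form (F4 M a u₀) (KerrExt M a) ∧
      ∀ x ∈ KerrExt M a, ∀ μ : Fin 4, current M a (F4 M a u₀) x μ = 0) := by
  have hM : 0 ≤ M := ha.trans haM.le
  refine ⟨⟨closed2Form_F3 a u₀ _, fun x hx => ?_⟩, closed2Form_F4 M a u₀ _, fun x hx => ?_⟩
  · refine current_eq_zero_of_eventuallyEq (k := 1) (H := F3Density M a u₀)
      (fun _ _ => by simp [F3Density, wedge]) ?_
    exact (eventually_kerr_nondegenerate hM hx).mono fun _ ⟨hΔ, hρ, hs⟩ =>
      maxwellDensity_F3 hΔ hρ hs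
  · refine current_eq_zero_of_eventuallyEq (k := 2) (H := F4Density a u₀)
      (fun _ _ => by simp [F4Density, wedge]) ?_
    exact (eventually_kerr_nondegenerate hM hx).mono fun _ ⟨hΔ, hρ, hs⟩ =>
      maxwellDensity_F4 hΔ hρ hs
end
end

section
/- Let M, a be reals with 0 ≤ a < M, set r₊ = M + √(M²−a²) and r₋ = M − √(M²−a²), and Δ(r) = r² − 2Mr + a² = (r−r₊)(r−r₋). Let c₁, c₂ be real constants and fix r₀ > r₊. Define W(r) = exp( −2 ∫_{r₀}^{r} (c₁ s² − c₂)/Δ(s) ds ) for r ∈ (r₊, ∞), and set q = 2(c₂ − c₁ r₊²)/(r₊ − r₋). If q ≥ 1, then the function r ↦ W(r)/Δ(r) has a finite limit as r → r₊ from the right (so it extends continuously to the horizon r = r₊); moreover the limit is 0 when q > 1. -/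
/-!
With Δ(s) = (s - r₊)(s - r₋), partial fractions give
`(c₁s² - c₂)/Δ(s) = c₁ - q/(2(s - r₊)) - q'/(2(s - r₋))`, where `q'` is `q` with the roles
of `r₊` and `r₋` exchanged. The integral is therefore elementary, and for `r > r₊`
`W(r)/Δ(r) = (r - r₊)^(q-1) · G(r)` with `G` continuous at `r₊`. For `q ≥ 1` the first
factor extends continuously to `r₊`, with value `0` when `q > 1`.
-/

open Real Filter Topology Set

noncomputable def horizonExponent (c₁ c₂ rp rm : ℝ) : ℝ :=
  2 * (c₂ - c₁ * rp ^ 2) / (rp - rm)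

noncomputable def radialPrimitive (c₁ c₂ rp rm s : ℝ) : ℝ :=
  c₁ * s - (horizonExponent c₁ c₂ rp rm * log (s - rp)
    + horizonExponent c₁ c₂ rm rp * log (s - rm)) / 2

noncomputable def regularProfile (c₁ c₂ rp rm r₀ r : ℝ) : ℝ :=
  (r - rp) ^ (horizonExponent c₁ c₂ rp rm - 1) *
    (exp (2 * radialPrimitive c₁ c₂ rp rm r₀ - 2 * c₁ * r) *
      (r - rm) ^ (horizonExponent c₁ c₂ rm rp - 1))

section

variable {c₁ c₂ rp rm : ℝ}

theorem div_sub_mul_sub_eq_partial_fractions (hr : rp ≠ rm) {s : ℝ} (hsp : s ≠ rp)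
    (hsm : s ≠ rm) :
    (c₁ * s ^ 2 - c₂) / ((s - rp) * (s - rm)) =
      c₁ - (horizonExponent c₁ c₂ rp rm / (s - rp)
        + horizonExponent c₁ c₂ rm rp / (s - rm)) / 2 := by
  have hp : s - rp ≠ 0 := sub_ne_zero.2 hsp
  have hm : s - rm ≠ 0 := sub_ne_zero.2 hsm
  have hpm : rp - rm ≠ 0 := sub_ne_zero.2 hr
  have hmp : rm - rp ≠ 0 := sub_ne_zero.2 hr.symm
  simp only [horizonExponent]
  field_simp
  ring

theorem hasDerivAt_radialPrimitive (hr : rp ≠ rm) {s : ℝ} (hsp : s ≠ rp) (hsm : s ≠ rm) :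
    HasDerivAt (radialPrimitive c₁ c₂ rp rm) ((c₁ * s ^ 2 - c₂) / ((s - rp) * (s - rm))) s := by
  have hlogp := ((hasDerivAt_id' s).sub_const rp).log (sub_ne_zero.2 hsp)
  have hlogm := ((hasDerivAt_id' s).sub_const rm).log (sub_ne_zero.2 hsm)
  rw [div_sub_mul_sub_eq_partial_fractions hr hsp hsm]
  have hlogs := (hlogp.const_mul (horizonExponent c₁ c₂ rp rm)).add
    (hlogm.const_mul (horizonExponent c₁ c₂ rm rp))
  exact (((hasDerivAt_id' s).const_mul c₁).sub (hlogs.div_const 2)).congr_deriv (by ring)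

theorem integral_eq_radialPrimitive_sub (hrm : rm < rp) {r₀ r : ℝ} (h₀ : rp < r₀)
    (hr : rp < r) :
    ∫ s in r₀..r, (c₁ * s ^ 2 - c₂) / ((s - rp) * (s - rm)) =
      radialPrimitive c₁ c₂ rp rm r - radialPrimitive c₁ c₂ rp rm r₀ := by
  have houtside : ∀ s ∈ uIcc r₀ r, s ≠ rp ∧ s ≠ rm := fun s hs => by
    have : rp < s := ordConnected_Ioi.uIcc_subset h₀ hr hs
    exact ⟨this.ne', (hrm.trans this).ne'⟩
  refine intervalIntegral.integral_eq_sub_of_hasDerivAt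
    (fun s hs => hasDerivAt_radialPrimitive hrm.ne' (houtside s hs).1 (houtside s hs).2)
    (ContinuousOn.intervalIntegrable ?_)
  refine ContinuousOn.div (by fun_prop) (by fun_prop) fun s hs => ?_
  exact mul_ne_zero (sub_ne_zero.2 (houtside s hs).1) (sub_ne_zero.2 (houtside s hs).2)

theorem exp_integral_div_eq_regularProfile (hrm : rm < rp) {r₀ r : ℝ} (h₀ : rp < r₀)
    (hr : rp < r) :
    exp (-2 * ∫ s in r₀..r, (c₁ * s ^ 2 - c₂) / ((s - rp) * (s - rm))) /
        ((r - rp) * (r - rm)) = regularProfile c₁ c₂ rp rm r₀ r := by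
  have hp : 0 < r - rp := sub_pos.2 hr
  have hm : 0 < r - rm := sub_pos.2 (hrm.trans hr)
  have hexponent : -2 * (radialPrimitive c₁ c₂ rp rm r - radialPrimitive c₁ c₂ rp rm r₀) =
      log (r - rp) * horizonExponent c₁ c₂ rp rm +
        ((2 * radialPrimitive c₁ c₂ rp rm r₀ - 2 * c₁ * r) +
          log (r - rm) * horizonExponent c₁ c₂ rm rp) := by
    simp only [radialPrimitive]
    ring
  rw [integral_eq_radialPrimitive_sub hrm h₀ hr, hexponent, exp_add, exp_add, regularProfile,
    rpow_sub_one hp.ne', rpow_sub_one hm.ne', rpow_def_of_pos hp, rpow_def_of_pos hm]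
  field_simp

theorem continuousAt_regularProfile (hrm : rm < rp) (hq : 1 ≤ horizonExponent c₁ c₂ rp rm)
    (r₀ : ℝ) : ContinuousAt (regularProfile c₁ c₂ rp rm r₀) rp := by
  have hfactor : ContinuousAt (fun r => (r - rm) ^ (horizonExponent c₁ c₂ rm rp - 1)) rp :=
    (continuousAt_id.sub continuousAt_const).rpow_const (Or.inl (sub_ne_zero.2 hrm.ne'))
  have hpower : ContinuousAt (fun r => (r - rp) ^ (horizonExponent c₁ c₂ rp rm - 1)) rp :=
    (continuousAt_id.sub continuousAt_const).rpow_const (Or.inr (sub_nonneg.2 hq))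
  exact hpower.mul ((continuous_exp.comp (by fun_prop)).continuousAt.mul hfactor)

theorem regularProfile_self_eq_zero (hq : 1 < horizonExponent c₁ c₂ rp rm) (r₀ : ℝ) :
    regularProfile c₁ c₂ rp rm r₀ rp = 0 := by
  rw [regularProfile, sub_self, zero_rpow (sub_pos.2 hq).ne', zero_mul]

end

theorem sq_sub_two_mul_add_sq_eq_mul {M a : ℝ} (h : a ^ 2 ≤ M ^ 2) (s : ℝ) :
    s ^ 2 - 2 * M * s + a ^ 2 =
      (s - (M + √(M ^ 2 - a ^ 2))) * (s - (M - √(M ^ 2 - a ^ 2))) := by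
  linear_combination Real.sq_sqrt (sub_nonneg.2 h)

/-- horizon regularity of the radial profile W(r)/Δ(r), with
W(r) = exp(−2 ∫_{r₀}^{r} (c₁s² − c₂)/Δ(s) ds) and q = 2(c₂ − c₁r₊²)/(r₊ − r₋):
if q ≥ 1 then W/Δ has a finite limit as r → r₊⁺, and the limit is 0 when q > 1. -/
theorem kerr_horizon_regularity (M a : ℝ) (ha : 0 ≤ a) (haM : a < M) (c₁ c₂ r₀ : ℝ)
    (hr₀ : M + Real.sqrt (M ^ 2 - a ^ 2) < r₀) :
    let rp := M + Real.sqrt (M ^ 2 - a ^ 2)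
    let rm := M - Real.sqrt (M ^ 2 - a ^ 2)
    let W : ℝ → ℝ := fun r =>
      Real.exp (-2 * ∫ s in r₀..r, (c₁ * s ^ 2 - c₂) / (s ^ 2 - 2 * M * s + a ^ 2))
    let q := 2 * (c₂ - c₁ * rp ^ 2) / (rp - rm)
    1 ≤ q →
      ∃ l : ℝ,
        Filter.Tendsto (fun r => W r / (r ^ 2 - 2 * M * r + a ^ 2))
          (nhdsWithin rp (Set.Ioi rp)) (nhds l) ∧ (1 < q → l = 0) := by
  intro rp rm W q hq
  have hMa : a ^ 2 < M ^ 2 := by nlinarith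
  have hrm : rm < rp := by
    have : 0 < √(M ^ 2 - a ^ 2) := Real.sqrt_pos.2 (sub_pos.2 hMa)
    simp only [rp, rm]
    linarith
  have hΔ : ∀ s, s ^ 2 - 2 * M * s + a ^ 2 = (s - rp) * (s - rm) :=
    sq_sub_two_mul_add_sq_eq_mul hMa.le
  refine ⟨regularProfile c₁ c₂ rp rm r₀ rp, ?_, fun hq₁ => regularProfile_self_eq_zero hq₁ r₀⟩
  refine ((continuousAt_regularProfile hrm hq r₀).tendsto.mono_left
    nhdsWithin_le_nhds).congr' ?_
  filter_upwards [self_mem_nhdsWithin] with r hr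
  simp only [W, hΔ]
  exact (exp_integral_div_eq_regularProfile hrm hr₀ hr).symm
end
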